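/- Let F be a Borel probability measure on [0,1], let θ₁, θ₂ > 0 and θ = θ₁ + θ₂, and define the operator L on C²([0,1]) by L g(x) = (1/2) x(1−x) E[ g''( x(1−W)+WV ) ] + (1/2)(θ₁ − θx) g'(x). Then for every integer n ≥ 1 there exists a polynomial P_n of degree exactly n such that for all x ∈ [0,1]: L P_n(x) = −λ_n P_n(x), where λ_n = (n/2) ( (n−1) E[ (1−W)^{n−2} ] + θ ). -/

import Mathlib

/-!
On polynomials the generator is upper triangular in the monomial basis: `x ↦ E[(x(1-W)+WV)^k]`
is a polynomial of degree `k` with leading coefficient `E[(1-W)^k]`, so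
`L x^k = -λ_k x^k + (lower order terms)`. The diagonal entries are pairwise distinct because
`λ_k` is strictly increasing: `θ > 0`, and `k(k-1) E[(1-W)^(k-2)]` is nondecreasing in `k`, since
integrating by parts against the density `2u` of `U` shows that its increment from `k` to `k + 1`
is `2k E[(1-Y)^(k-1)] ≥ 0`. A triangular operator with distinct diagonal has an eigenvector of
every exact degree.
-/

open MeasureTheory Set

/-- The two-type Λ-Fleming-Viot generator with parent-independent mutation,
`L g(x) = (1/2) x(1-x) E[g''(x(1-W)+WV)] + (1/2)(θ₁ - θ x) g'(x)`,
where `W = U⬝Y`, `Y ∼ F`, `U` with density `2u` on `(0,1)`, `V` uniform on `(0,1)`. -/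
noncomputable def Lop (F : Measure ℝ) (θ₁ θ₂ : ℝ) (g : ℝ → ℝ) (x : ℝ) : ℝ :=
  (1/2) * x * (1 - x) *
    (∫ y, (∫ u in Set.Ioo (0:ℝ) 1, (∫ v in Set.Ioo (0:ℝ) 1,
      deriv (deriv g) (x * (1 - u * y) + u * y * v)) * (2 * u)) ∂F)
  + (1/2) * (θ₁ - (θ₁ + θ₂) * x) * deriv g x

/-- `E[(1-W)^j]` where `W = U⬝Y`. -/
noncomputable def expMom (F : Measure ℝ) (j : ℕ) : ℝ :=
  ∫ y, (∫ u in Set.Ioo (0:ℝ) 1, (1 - u * y) ^ j * (2 * u)) ∂F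

open Polynomial

namespace Polynomial

variable {K : Type*} [Field K]

def IsTriangular (T : K[X] →ₗ[K] K[X]) (d : ℕ → K) : Prop :=
  ∀ k, (T (X ^ k)).natDegree ≤ k ∧ (T (X ^ k)).coeff k = d k

namespace IsTriangular

variable {T : K[X] →ₗ[K] K[X]} {d : ℕ → K} {P : K[X]} {m : ℕ}

lemma apply_eq_sum (hP : P.natDegree ≤ m) :
    T P = ∑ i ∈ Finset.range (m + 1), P.coeff i • T (X ^ i) := by
  conv_lhs => rw [P.as_sum_range_C_mul_X_pow' (Nat.lt_succ_of_le hP)]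
  simp only [map_sum, ← smul_eq_C_mul, map_smul]

lemma natDegree_apply_le (hT : IsTriangular T d) (hP : P.natDegree ≤ m) :
    (T P).natDegree ≤ m := by
  rw [apply_eq_sum hP]
  refine natDegree_sum_le_of_forall_le _ _ fun i hi => (natDegree_smul_le _ _).trans ?_
  exact (hT i).1.trans (Nat.lt_succ_iff.mp (Finset.mem_range.mp hi))

lemma coeff_apply (hT : IsTriangular T d) (hP : P.natDegree ≤ m) :
    (T P).coeff m = d m * P.coeff m := by
  rw [apply_eq_sum hP, finsetSum_coeff, Finset.sum_eq_single m]
  · rw [coeff_smul, (hT m).2, smul_eq_mul, mul_comm]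
  · intro i hi hne
    have hlt : i < m := by have := Finset.mem_range.mp hi; omega
    rw [coeff_smul, coeff_eq_zero_of_natDegree_lt ((hT i).1.trans_lt hlt), smul_zero]
  · simp

/-- `T - d n` maps `K[X]_(n+1)` into `K[X]_n`, a space of smaller dimension, so it has a kernel;
a nonzero kernel element of degree `k < n` would force `d k = d n`. -/
theorem exists_eigenvector (hT : IsTriangular T d) (n : ℕ) (hd : ∀ k < n, d k ≠ d n) :
    ∃ P : K[X], P.natDegree = n ∧ T P = d n • P := by
  set S : K[X] →ₗ[K] K[X] := T - d n • LinearMap.id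
  have hmaps : ∀ P : degreeLT K (n + 1), S P ∈ degreeLT K n := by
    rintro ⟨P, hP⟩
    rw [degreeLT_succ_eq_degreeLE, mem_degreeLE, ← natDegree_le_iff_degree_le] at hP
    rw [mem_degreeLT, degree_lt_iff_coeff_zero]
    intro j hj
    rcases hj.eq_or_lt with rfl | hj
    · simp [S, hT.coeff_apply hP]
    · have hS : (S P).natDegree ≤ n := by
        simpa [S] using
          natDegree_sub_le_of_le (hT.natDegree_apply_le hP) ((natDegree_smul_le (d n) _).trans hP)
      exact coeff_eq_zero_of_natDegree_lt (hS.trans_lt hj)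
  have hdim : Module.finrank K (degreeLT K n) < Module.finrank K (degreeLT K (n + 1)) := by
    simp [Module.finrank_eq_card_basis (degreeLT.basis K _)]
  obtain ⟨⟨P, hP⟩, hker, hP0⟩ := Submodule.exists_mem_ne_zero_of_ne_bot
    (LinearMap.ker_ne_bot_of_finrank_lt (f := (S ∘ₗ Submodule.subtype _).codRestrict _ hmaps) hdim)
  have hTP : T P = d n • P := sub_eq_zero.mp (congrArg Subtype.val hker)
  have hP0 : P ≠ 0 := by simpa using hP0
  rw [degreeLT_succ_eq_degreeLE, mem_degreeLE, ← natDegree_le_iff_degree_le] at hP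
  refine ⟨P, hP.antisymm (not_lt.mp fun hlt => hd _ hlt ?_), hTP⟩
  have hcoeff := hT.coeff_apply le_rfl (P := P)
  rw [hTP, coeff_smul, smul_eq_mul] at hcoeff
  exact (mul_right_cancel₀ (leadingCoeff_ne_zero.mpr hP0) hcoeff).symm

end IsTriangular

end Polynomial

lemma continuous_setIntegral_Ioo {X : Type*} [TopologicalSpace X] [FirstCountableTopology X]
    [LocallyCompactSpace X] {f : X → ℝ → ℝ} (hf : Continuous (Function.uncurry f)) (a b : ℝ) :
    Continuous fun x => ∫ t in Ioo a b, f x t := by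
  simp_rw [← integral_Icc_eq_integral_Ioo]
  exact continuous_parametric_integral_of_continuous hf isCompact_Icc

lemma Continuous.integrableOn_Ioo {f : ℝ → ℝ} (hf : Continuous f) (a b : ℝ) :
    IntegrableOn f (Ioo a b) :=
  hf.integrableOn_Icc.mono_set Ioo_subset_Icc_self

lemma Continuous.integrable_of_measure_compl_eq_zero {α : Type*} [TopologicalSpace α] [T2Space α]
    [MeasurableSpace α] [OpensMeasurableSpace α] {μ : Measure α} [IsFiniteMeasure μ]
    {K : Set α} (hK : IsCompact K) (hμ : μ Kᶜ = 0) {f : α → ℝ} (hf : Continuous f) :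
    Integrable f μ := by
  rw [← Measure.restrict_eq_self_of_ae_mem (mem_ae_iff.mpr hμ)]
  exact hf.continuousOn.integrableOn_compact hK

/-- `expectYUV F h = E[h(Y, U, V)]` with `Y ∼ F`, `U` of density `2u` and `V` uniform on `(0,1)`. -/
noncomputable def expectYUV (F : Measure ℝ) (h : ℝ → ℝ → ℝ → ℝ) : ℝ :=
  ∫ y, (∫ u in Ioo (0:ℝ) 1, (∫ v in Ioo (0:ℝ) 1, h y u v) * (2 * u)) ∂F

lemma expMom_eq_expectYUV (F : Measure ℝ) (k : ℕ) :
    expMom F k = expectYUV F fun y u _ => (1 - u * y) ^ k := by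
  simp [expMom, expectYUV]

section
variable {F : Measure ℝ} {h : ℝ → ℝ → ℝ → ℝ}

lemma continuous_integral_v (hh : Continuous fun p : ℝ × ℝ × ℝ => h p.1 p.2.1 p.2.2) :
    Continuous fun q : ℝ × ℝ => ∫ v in Ioo (0:ℝ) 1, h q.1 q.2 v :=
  continuous_setIntegral_Ioo (f := fun (q : ℝ × ℝ) v => h q.1 q.2 v)
    (hh.comp (by fun_prop : Continuous fun p : (ℝ × ℝ) × ℝ => (p.1.1, p.1.2, p.2))) 0 1

lemma continuous_integral_uv (hh : Continuous fun p : ℝ × ℝ × ℝ => h p.1 p.2.1 p.2.2) :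
    Continuous fun y => ∫ u in Ioo (0:ℝ) 1, (∫ v in Ioo (0:ℝ) 1, h y u v) * (2 * u) :=
  continuous_setIntegral_Ioo (f := fun y u => (∫ v in Ioo (0:ℝ) 1, h y u v) * (2 * u))
    ((continuous_integral_v hh).mul (by fun_prop)) 0 1

lemma expectYUV_const_mul (c : ℝ) :
    expectYUV F (fun y u v => c * h y u v) = c * expectYUV F h := by
  simp only [expectYUV, integral_const_mul, mul_assoc]

lemma expectYUV_finsetSum [IsFiniteMeasure F] (hF : F (Icc (0:ℝ) 1)ᶜ = 0) {ι : Type*}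
    (s : Finset ι) (h : ι → ℝ → ℝ → ℝ → ℝ)
    (hh : ∀ i ∈ s, Continuous fun p : ℝ × ℝ × ℝ => h i p.1 p.2.1 p.2.2) :
    expectYUV F (fun y u v => ∑ i ∈ s, h i y u v) = ∑ i ∈ s, expectYUV F (h i) := by
  have hv : ∀ y u, ∫ v in Ioo (0:ℝ) 1, ∑ i ∈ s, h i y u v
      = ∑ i ∈ s, ∫ v in Ioo (0:ℝ) 1, h i y u v := fun y u =>
    integral_finsetSum _ fun i hi =>
      ((hh i hi).comp (by fun_prop : Continuous fun v : ℝ => (y, u, v))).integrableOn_Ioo 0 1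
  have hu : ∀ y, ∫ u in Ioo (0:ℝ) 1, (∫ v in Ioo (0:ℝ) 1, ∑ i ∈ s, h i y u v) * (2 * u)
      = ∑ i ∈ s, ∫ u in Ioo (0:ℝ) 1, (∫ v in Ioo (0:ℝ) 1, h i y u v) * (2 * u) := fun y => by
    simp_rw [hv, Finset.sum_mul]
    exact integral_finsetSum _ fun i hi =>
      (((continuous_integral_v (hh i hi)).comp (by fun_prop : Continuous fun u : ℝ => (y, u))).mul
        (by fun_prop)).integrableOn_Ioo 0 1
  simp_rw [expectYUV, hu]
  exact integral_finsetSum _ fun i hi =>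
    (continuous_integral_uv (hh i hi)).integrable_of_measure_compl_eq_zero isCompact_Icc hF
end

section
variable (F : Measure ℝ)

/-- `E[(x(1-W) + WV)^k]` as a polynomial in `x`, by the binomial theorem. -/
noncomputable def avgMonomial (k : ℕ) : ℝ[X] :=
  ∑ i ∈ Finset.range (k + 1),
    C (k.choose i * expectYUV F fun y u v => (1 - u * y) ^ i * (u * y * v) ^ (k - i)) * X ^ i

noncomputable def avgPoly : ℝ[X] →ₗ[ℝ] ℝ[X] :=
  Polynomial.lsum fun k => LinearMap.toSpanSingleton ℝ ℝ[X] (avgMonomial F k)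

variable {F}

lemma natDegree_avgMonomial_le (k : ℕ) : (avgMonomial F k).natDegree ≤ k :=
  natDegree_sum_le_of_forall_le _ _ fun _ hi =>
    (natDegree_C_mul_X_pow_le _ _).trans (Nat.lt_succ_iff.mp (Finset.mem_range.mp hi))

lemma coeff_avgMonomial_self (k : ℕ) : (avgMonomial F k).coeff k = expMom F k := by
  rw [avgMonomial, finsetSum_coeff, Finset.sum_eq_single k]
  · simp [expMom_eq_expectYUV]
  · intro i _ hik
    rw [coeff_C_mul_X_pow, if_neg (Ne.symm hik)]
  · simp

lemma eval_avgMonomial [IsFiniteMeasure F] (hF : F (Icc (0:ℝ) 1)ᶜ = 0) (k : ℕ) (x : ℝ) :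
    (avgMonomial F k).eval x = expectYUV F fun y u v => (x * (1 - u * y) + u * y * v) ^ k := by
  simp_rw [add_pow, mul_pow]
  rw [expectYUV_finsetSum hF _ _ fun i _ => by fun_prop]
  simp only [avgMonomial, eval_finsetSum, eval_C_mul, eval_X_pow]
  refine Finset.sum_congr rfl fun i _ => ?_
  rw [mul_comm, ← expectYUV_const_mul, ← expectYUV_const_mul]
  congr 1; funext y u v; ring

lemma avgPoly_X_pow (k : ℕ) : avgPoly F (X ^ k) = avgMonomial F k := by
  rw [avgPoly, lsum_apply, ← monomial_one_right_eq_X_pow, sum_monomial_index _ _ (by simp)]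
  simp

lemma eval_avgPoly [IsFiniteMeasure F] (hF : F (Icc (0:ℝ) 1)ᶜ = 0) (Q : ℝ[X]) (x : ℝ) :
    (avgPoly F Q).eval x = expectYUV F fun y u v => Q.eval (x * (1 - u * y) + u * y * v) := by
  conv_rhs => enter [2, y, u, v]; rw [eval_eq_sum, sum_def]
  rw [expectYUV_finsetSum hF _ _ fun _ _ => by fun_prop]
  simp only [avgPoly, lsum_apply, sum_def, LinearMap.toSpanSingleton_apply, eval_finsetSum,
    eval_smul, smul_eq_mul, eval_avgMonomial hF, expectYUV_const_mul]
end

noncomputable def generatorPoly (F : Measure ℝ) (θ₁ θ₂ : ℝ) : ℝ[X] →ₗ[ℝ] ℝ[X] where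
  toFun P := C (1 / 2) * (X * (1 - X) * avgPoly F (derivative (derivative P))
    + (C θ₁ - C (θ₁ + θ₂) * X) * derivative P)
  map_add' P Q := by simp only [map_add]; ring
  map_smul' c P := by
    simp only [map_smul, RingHom.id_apply]
    simp only [smul_eq_C_mul]
    ring

lemma eval_generatorPoly {F : Measure ℝ} [IsFiniteMeasure F] (hF : F (Icc (0:ℝ) 1)ᶜ = 0)
    (θ₁ θ₂ : ℝ) (P : ℝ[X]) (x : ℝ) :
    (generatorPoly F θ₁ θ₂ P).eval x = Lop F θ₁ θ₂ (fun t => P.eval t) x := by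
  have hderiv : ∀ Q : ℝ[X], deriv (fun t => Q.eval t) = fun t => (derivative Q).eval t :=
    fun Q => funext fun t => Q.deriv
  simp only [Lop, hderiv, generatorPoly, LinearMap.coe_mk, AddHom.coe_mk, eval_add, eval_mul,
    eval_C, eval_X, eval_sub, eval_one, eval_avgPoly hF, expectYUV]
  ring

noncomputable def fvLambda (F : Measure ℝ) (θ : ℝ) (n : ℕ) : ℝ :=
  (n / 2) * ((n - 1) * expMom F (n - 2) + θ)

lemma generatorPoly_X_pow_add_two (F : Measure ℝ) (θ₁ θ₂ : ℝ) (m : ℕ) :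
    generatorPoly F θ₁ θ₂ (X ^ (m + 2)) =
      C (1 / 2) * (C (((m : ℝ) + 2) * (m + 1)) * (X * avgMonomial F m - X * (X * avgMonomial F m))
        + C ((m : ℝ) + 2) * (C θ₁ * X ^ (m + 1) - C (θ₁ + θ₂) * (X * X ^ (m + 1)))) := by
  have h2 : derivative (derivative (X ^ (m + 2) : ℝ[X])) = (((m : ℝ) + 2) * (m + 1)) • X ^ m := by
    rw [smul_eq_C_mul, derivative_X_pow, derivative_C_mul, derivative_X_pow, ← mul_assoc, ← C_mul]
    push_cast
    ring_nf
  have h1 : derivative (X ^ (m + 2) : ℝ[X]) = C ((m : ℝ) + 2) * X ^ (m + 1) := by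
    rw [derivative_X_pow]
    push_cast
    rfl
  simp only [generatorPoly, LinearMap.coe_mk, AddHom.coe_mk]
  rw [h2, h1, map_smul, avgPoly_X_pow, smul_eq_C_mul]
  ring

lemma generatorPoly_X (F : Measure ℝ) (θ₁ θ₂ : ℝ) :
    generatorPoly F θ₁ θ₂ X = C (1 / 2) * (C θ₁ - C (θ₁ + θ₂) * X) := by
  simp [generatorPoly]

lemma isTriangular_generatorPoly (F : Measure ℝ) (θ₁ θ₂ : ℝ) :
    IsTriangular (generatorPoly F θ₁ θ₂) fun k => -fvLambda F (θ₁ + θ₂) k := by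
  intro k
  rcases k with _ | _ | m
  · simp [generatorPoly, fvLambda]
  · rw [pow_one, generatorPoly_X]
    constructor
    · compute_degree!
    · norm_num [fvLambda]
      ring
  · rw [generatorPoly_X_pow_add_two]
    constructor
    · have hA := natDegree_avgMonomial_le (F := F) m
      have hX : ∀ {p : ℝ[X]} {n : ℕ}, p.natDegree ≤ n → (X * p).natDegree ≤ n + 1 := fun h =>
        (natDegree_mul_le_of_le natDegree_X_le h).trans (by omega)
      refine (natDegree_C_mul_le _ _).trans <| natDegree_add_le_of_degree_le ?_ ?_
      · refine (natDegree_C_mul_le _ _).trans <| (natDegree_sub_le _ _).trans <| max_le ?_ ?_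
        · exact (hX hA).trans (by omega)
        · exact hX (hX hA)
      · refine (natDegree_C_mul_le _ _).trans <| (natDegree_sub_le _ _).trans <| max_le ?_ ?_
        · exact (natDegree_C_mul_le _ _).trans ((natDegree_X_pow_le _).trans (by omega))
        · exact (natDegree_C_mul_le _ _).trans (hX (natDegree_X_pow_le _))
    · have hA : (avgMonomial F m).coeff (m + 1) = 0 :=
        coeff_eq_zero_of_natDegree_lt ((natDegree_avgMonomial_le m).trans_lt (Nat.lt_succ_self m))
      simp only [coeff_C_mul, coeff_add, coeff_sub, coeff_X_mul, coeff_X_pow_self, coeff_X_pow,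
        coeff_avgMonomial_self, hA, if_neg (by omega : m + 2 ≠ m + 1), fvLambda]
      push_cast
      ring

section
variable {F : Measure ℝ}

lemma hasDerivAt_sq_mul_one_sub_mul_pow (y : ℝ) (m : ℕ) (u : ℝ) :
    HasDerivAt (fun u => 2 * ((m : ℝ) + 2) * (u ^ 2 * (1 - u * y) ^ (m + 1)))
      (((m : ℝ) + 3) * (m + 2) * ((1 - u * y) ^ (m + 1) * (2 * u))
        - ((m : ℝ) + 2) * (m + 1) * ((1 - u * y) ^ m * (2 * u))) u := by
  have hlin : HasDerivAt (fun u : ℝ => 1 - u * y) (-y) u := by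
    simpa using ((hasDerivAt_id u).mul_const y).const_sub 1
  refine (((hasDerivAt_pow 2 u).mul (hlin.pow (m + 1))).const_mul _).congr_deriv ?_
  simp only [Nat.add_sub_cancel, Pi.pow_apply, pow_succ]
  push_cast
  ring

lemma integral_one_sub_mul_pow_succ_sub (y : ℝ) (m : ℕ) :
    ((m : ℝ) + 3) * (m + 2) * (∫ u in Ioo (0:ℝ) 1, (1 - u * y) ^ (m + 1) * (2 * u))
      - ((m : ℝ) + 2) * (m + 1) * (∫ u in Ioo (0:ℝ) 1, (1 - u * y) ^ m * (2 * u))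
      = 2 * ((m : ℝ) + 2) * (1 - y) ^ (m + 1) := by
  rw [← integral_const_mul, ← integral_const_mul,
    ← integral_sub (Continuous.integrableOn_Ioo (by fun_prop) 0 1)
      (Continuous.integrableOn_Ioo (by fun_prop) 0 1),
    ← integral_Ioc_eq_integral_Ioo, ← intervalIntegral.integral_of_le zero_le_one,
    intervalIntegral.integral_eq_sub_of_hasDerivAt
      (fun u _ => hasDerivAt_sq_mul_one_sub_mul_pow y m u)
      (Continuous.intervalIntegrable (by fun_prop) _ _)]
  simp

lemma expMom_nonneg (hF : F (Icc (0:ℝ) 1)ᶜ = 0) (k : ℕ) : 0 ≤ expMom F k := by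
  refine integral_nonneg_of_ae ?_
  filter_upwards [mem_ae_iff.mpr hF] with y hy
  refine setIntegral_nonneg measurableSet_Ioo fun u hu => ?_
  have : u * y ≤ 1 := by nlinarith [hy.1, hy.2, hu.1, hu.2]
  have : 0 < u := hu.1
  positivity

lemma expMom_mul_le [IsFiniteMeasure F] (hF : F (Icc (0:ℝ) 1)ᶜ = 0) (m : ℕ) :
    ((m : ℝ) + 2) * (m + 1) * expMom F m ≤ ((m : ℝ) + 3) * (m + 2) * expMom F (m + 1) := by
  have hint : ∀ k : ℕ, Integrable (fun y => ∫ u in Ioo (0:ℝ) 1, (1 - u * y) ^ k * (2 * u)) F :=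
    fun k => (continuous_setIntegral_Ioo (f := fun y u => (1 - u * y) ^ k * (2 * u))
      (by fun_prop) 0 1).integrable_of_measure_compl_eq_zero isCompact_Icc hF
  rw [expMom, expMom, ← integral_const_mul, ← integral_const_mul]
  refine integral_mono_ae ((hint m).const_mul _) ((hint (m + 1)).const_mul _) ?_
  filter_upwards [mem_ae_iff.mpr hF] with y hy
  have h := integral_one_sub_mul_pow_succ_sub y m
  have : 0 ≤ 2 * ((m : ℝ) + 2) * (1 - y) ^ (m + 1) := by
    have : 0 ≤ 1 - y := by linarith [hy.2]
    positivity
  linarith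

lemma fvLambda_strictMono [IsFiniteMeasure F] (hF : F (Icc (0:ℝ) 1)ᶜ = 0) {θ : ℝ} (hθ : 0 < θ) :
    StrictMono (fvLambda F θ) := by
  refine strictMono_nat_of_lt_succ fun n => ?_
  rcases n with _ | _ | m
  · norm_num [fvLambda, hθ]
  · norm_num [fvLambda]
    linarith [expMom_nonneg hF 0]
  · have := expMom_mul_le hF m
    simp only [fvLambda]
    push_cast
    nlinarith
end

/-- for each `n ≥ 1` there is a polynomial eigenvector of degree exactly `n`
of the Λ-Fleming-Viot generator, with eigenvalue `-λ_n`, where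
`λ_n = (n/2)((n-1) E[(1-W)^{n-2}] + θ)`. -/
theorem stmt10 (F : Measure ℝ) [IsProbabilityMeasure F]
    (hF : F (Set.Icc (0:ℝ) 1)ᶜ = 0)
    (θ₁ θ₂ : ℝ) (hθ₁ : 0 < θ₁) (hθ₂ : 0 < θ₂) :
    ∀ n : ℕ, 1 ≤ n → ∃ P : Polynomial ℝ, P.natDegree = n ∧
      ∀ x ∈ Set.Icc (0:ℝ) 1,
        Lop F θ₁ θ₂ (fun t => Polynomial.eval t P) x
          = -(((n : ℝ) / 2) * (((n : ℝ) - 1) * expMom F (n - 2) + (θ₁ + θ₂))) *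
              Polynomial.eval x P := by
  intro n _
  have hdistinct : ∀ k < n, -fvLambda F (θ₁ + θ₂) k ≠ -fvLambda F (θ₁ + θ₂) n := fun k hk =>
    neg_injective.ne ((fvLambda_strictMono hF (add_pos hθ₁ hθ₂)).injective.ne hk.ne)
  obtain ⟨P, hdeg, hP⟩ := (isTriangular_generatorPoly F θ₁ θ₂).exists_eigenvector n hdistinct
  refine ⟨P, hdeg, fun x _ => ?_⟩
  rw [← eval_generatorPoly hF, hP, eval_smul, smul_eq_mul]
  rfl
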